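/- The Hardy model is not strongly contextual: let ψ₀ = (e₀⊗e₀ + e₁⊗e₀ + e₁⊗e₁)/√3 in EuclideanSpace ℂ (Fin 2 × Fin 2), and let vZ(a) = e_a and vX(a) = (e₀ + (−1)^a e₁)/√2 for a ∈ {0,1}. Then there exist a, b, u, w ∈ {0,1} such that all four inner products ⟪vZ(a)⊗vZ(b), ψ₀⟫, ⟪vZ(a)⊗vX(w), ψ₀⟫, ⟪vX(u)⊗vZ(b), ψ₀⟫, ⟪vX(u)⊗vX(w), ψ₀⟫ are nonzero; i.e. there is a global assignment of outcomes to all four measurements whose restriction to every measurement context is a possible (nonzero Born probability) event. -/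

import Mathlib

open scoped InnerProductSpace

noncomputable section

/-- Standard basis vectors `e₀, e₁` of `ℂ²`. -/
def e (a : Fin 2) : EuclideanSpace ℂ (Fin 2) := EuclideanSpace.single a 1

/-- Twofold product vector: `(φ⊗χ)(j,k) = φ(j)·χ(k)`. -/
def tp2 (φ χ : EuclideanSpace ℂ (Fin 2)) :
    EuclideanSpace ℂ (Fin 2 × Fin 2) :=
  WithLp.toLp 2 (fun p => φ p.1 * χ p.2)

/-- The Hardy state `ψ₀ = (e₀⊗e₀ + e₁⊗e₀ + e₁⊗e₁)/√3`. -/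
def ψ₀ : EuclideanSpace ℂ (Fin 2 × Fin 2) :=
  (Real.sqrt 3 : ℂ)⁻¹ • (tp2 (e 0) (e 0) + tp2 (e 1) (e 0) + tp2 (e 1) (e 1))

/-- Z-basis (computational basis) vectors `vZ(a) = e_a`. -/
def vZ (a : Fin 2) : EuclideanSpace ℂ (Fin 2) := e a

/-- X-basis vectors `vX(a) = (e₀ + (−1)^a e₁)/√2`. -/
def vX (a : Fin 2) : EuclideanSpace ℂ (Fin 2) :=
  (Real.sqrt 2 : ℂ)⁻¹ • (e 0 + ((-1 : ℂ) ^ (a : ℕ)) • e 1)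

theorem inner_tp2_tp2 (φ χ φ' χ' : EuclideanSpace ℂ (Fin 2)) :
    ⟪tp2 φ χ, tp2 φ' χ'⟫_ℂ = ⟪φ, φ'⟫_ℂ * ⟪χ, χ'⟫_ℂ := by
  simp only [tp2, PiLp.inner_apply, RCLike.inner_apply, Fintype.sum_prod_type, Finset.sum_mul_sum,
    map_mul]
  refine Finset.sum_congr rfl fun i _ => Finset.sum_congr rfl fun j _ => ?_
  ring

theorem inner_tp2_ψ₀ (φ χ : EuclideanSpace ℂ (Fin 2)) :
    ⟪tp2 φ χ, ψ₀⟫_ℂ = (Real.sqrt 3 : ℂ)⁻¹ *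
      (⟪φ, e 0⟫_ℂ * ⟪χ, e 0⟫_ℂ + ⟪φ, e 1⟫_ℂ * ⟪χ, e 0⟫_ℂ + ⟪φ, e 1⟫_ℂ * ⟪χ, e 1⟫_ℂ) := by
  simp only [ψ₀, inner_smul_right, inner_add_right, inner_tp2_tp2]

theorem inner_vZ_e (a b : Fin 2) : ⟪vZ a, e b⟫_ℂ = if a = b then 1 else 0 := by
  simp [vZ, e, EuclideanSpace.inner_single_left]

theorem inner_vX_e_zero (u : Fin 2) : ⟪vX u, e 0⟫_ℂ = (Real.sqrt 2 : ℂ)⁻¹ := by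
  simp [vX, e, EuclideanSpace.inner_single_right]

theorem inner_vX_e_one (u : Fin 2) : ⟪vX u, e 1⟫_ℂ = (-1) ^ (u : ℕ) * (Real.sqrt 2 : ℂ)⁻¹ := by
  simp [vX, e, EuclideanSpace.inner_single_right]

/-- The Hardy model is not strongly contextual: there is a global assignment
of outcomes to all four measurements whose restriction to every measurement
context is a possible (nonzero-amplitude) event. -/
theorem hardy_not_strongly_contextual :
    ∃ a b u w : Fin 2,
      ⟪tp2 (vZ a) (vZ b), ψ₀⟫_ℂ ≠ 0 ∧
      ⟪tp2 (vZ a) (vX w), ψ₀⟫_ℂ ≠ 0 ∧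
      ⟪tp2 (vX u) (vZ b), ψ₀⟫_ℂ ≠ 0 ∧
      ⟪tp2 (vX u) (vX w), ψ₀⟫_ℂ ≠ 0 := by
  -- `vZ 1`, `vZ 0` and `vX 0` have nonnegative real coordinates, so each amplitude is a sum of
  -- nonnegative terms, one of which is positive.
  refine ⟨1, 0, 0, 0, ?_, ?_, ?_, ?_⟩ <;>
    norm_num [inner_tp2_ψ₀, inner_vZ_e, inner_vX_e_zero, inner_vX_e_one, ← mul_inv,
      ← Complex.ofReal_mul]
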